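/- arXiv:2102.08726 — 3 statements merged into one kernel-verified Lean document; each statement's English description precedes it below -/
import Mathlib

section
/- Let $W \in \mathbb{C}^{I \times I}$, let $H_{\star} \in \mathbb{C}^{N \times N}$ be invertible, and let $H_1,\dots,H_I \in \mathbb{C}^{N \times N}$. Set $\mathbf{W} = W \otimes \mathbf{I}_N$, $\mathbf{H}_{\star} = \mathbf{I}_I \otimes H_{\star}$, $\boldsymbol{\mathfrak{H}} = \mathrm{blockdiag}(H_1,\dots,H_I)$ and $\mathbf{M} = \boldsymbol{\mathfrak{H}}\,\mathbf{H}_{\star}^{-1}$. Let $\alpha \neq 0$, $\mu \in \mathbb{C}$, and suppose $\mathbf{x}, \mathbf{g} \in \mathbb{C}^{IN}$ satisfy the eigenvalue equations $\mu \mathbf{x} = \mathbf{W}\mathbf{x} - \alpha \mathbf{H}_{\star}^{-1}\mathbf{g}$ and $\mu \mathbf{g} = \mathbf{W}\boldsymbol{\mathfrak{H}}(\mathbf{W} - \mathbf{I})\mathbf{x} + (\mathbf{W} - \alpha \mathbf{W}\boldsymbol{\mathfrak{H}}\mathbf{H}_{\star}^{-1})\mathbf{g}$. Then the vector $\mathbf{u}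 = -\alpha^{-1}\mathbf{H}_{\star}\mathbf{x}$ satisfies the generalized eigenvalue equation $(\mu \mathbf{I} - \mathbf{W})^2 \mathbf{u} = \alpha(1 - \mu)\,\mathbf{W}\mathbf{M}\,\mathbf{u}$; i.e., $\alpha(1-\mu)$ is a generalized eigenvalue of the matrix pair $((\mu\mathbf{I} - \mathbf{W})^2, \mathbf{W}\mathbf{M})$ whenever $\mathbf{u} \neq 0$. -/
open Matrix Kronecker

/-- Reduction of the eigenvalue equations of the local-dynamics matrix
`Γ(α)` of the distributed Newton method to a generalized eigenvalue equation:
if `μ𝐱 = 𝐖𝐱 - α𝐇⋆⁻¹𝐠` and `μ𝐠 = 𝐖𝕳(𝐖 - 𝐈)𝐱 + (𝐖 - α𝐖𝕳𝐇⋆⁻¹)𝐠`, then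
`𝐮 = -α⁻¹𝐇⋆𝐱` satisfies `(μ𝐈 - 𝐖)²𝐮 = α(1 - μ)𝐖𝐌𝐮`, with `𝐌 = 𝕳𝐇⋆⁻¹`. -/
theorem stmt_4 {I N : ℕ} (W : Matrix (Fin I) (Fin I) ℂ)
    (Hstar : Matrix (Fin N) (Fin N) ℂ) (hHstar : IsUnit Hstar)
    (H : Fin I → Matrix (Fin N) (Fin N) ℂ)
    (α μ : ℂ) (hα : α ≠ 0)
    (x g : Fin I × Fin N → ℂ)
    (bW : Matrix (Fin I × Fin N) (Fin I × Fin N) ℂ)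
    (hbW : bW = W ⊗ₖ (1 : Matrix (Fin N) (Fin N) ℂ))
    (bHstar : Matrix (Fin I × Fin N) (Fin I × Fin N) ℂ)
    (hbHstar : bHstar = (1 : Matrix (Fin I) (Fin I) ℂ) ⊗ₖ Hstar)
    (bH : Matrix (Fin I × Fin N) (Fin I × Fin N) ℂ)
    (hbH : bH = Matrix.of fun p q => if p.1 = q.1 then H p.1 p.2 q.2 else 0)
    (heq1 : μ • x = bW *ᵥ x - α • (bHstar⁻¹ *ᵥ g))
    (heq2 : μ • g = (bW * bH * (bW - 1)) *ᵥ x + (bW - α • (bW * bH * bHstar⁻¹)) *ᵥ g) :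
    ((μ • (1 : Matrix (Fin I × Fin N) (Fin I × Fin N) ℂ) - bW) ^ 2) *ᵥ
        ((-α⁻¹) • (bHstar *ᵥ x))
      = (α * (1 - μ)) • ((bW * (bH * bHstar⁻¹)) *ᵥ ((-α⁻¹) • (bHstar *ᵥ x))) := by
  have hdet : IsUnit Hstar.det := (Matrix.isUnit_iff_isUnit_det _).mp hHstar
  have h1 : Hstar * Hstar⁻¹ = 1 := Matrix.mul_nonsing_inv _ hdet
  have h2 : Hstar⁻¹ * Hstar = 1 := Matrix.nonsing_inv_mul _ hdet
  have hSinv : bHstar⁻¹ = (1 : Matrix (Fin I) (Fin I) ℂ) ⊗ₖ Hstar⁻¹ := by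
    apply Matrix.inv_eq_right_inv
    rw [hbHstar, ← Matrix.mul_kronecker_mul, one_mul, h1, Matrix.one_kronecker_one]
  have hSS : bHstar * bHstar⁻¹ = 1 := by
    rw [hSinv, hbHstar, ← Matrix.mul_kronecker_mul, one_mul, h1, Matrix.one_kronecker_one]
  have hSS' : bHstar⁻¹ * bHstar = 1 := by
    rw [hSinv, hbHstar, ← Matrix.mul_kronecker_mul, one_mul, h2, Matrix.one_kronecker_one]
  have hc : bW * bHstar = bHstar * bW := by
    rw [hbHstar, hbW, ← Matrix.mul_kronecker_mul, ← Matrix.mul_kronecker_mul,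
      one_mul, mul_one, one_mul, mul_one]
  have hcol : ∀ M : Matrix (Fin I × Fin N) (Fin I × Fin N) ℂ,
      bHstar⁻¹ * (bHstar * M) = M := by
    intro M; rw [← Matrix.mul_assoc, hSS', Matrix.one_mul]
  have hcomm2 : bW * (bHstar * bW) = bHstar * (bW * bW) := by
    rw [← Matrix.mul_assoc, hc, Matrix.mul_assoc]
  have e1 : α • (bHstar⁻¹ *ᵥ g) = bW *ᵥ x - μ • x := by rw [heq1]; module
  have hg : α • g = (bHstar * bW) *ᵥ x - μ • (bHstar *ᵥ x) := by
    have := congrArg (fun v => bHstar *ᵥ v) e1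
    simpa [Matrix.mulVec_smul, Matrix.mulVec_sub, Matrix.mulVec_mulVec, hSS,
      Matrix.one_mulVec] using this
  have heq2' : μ • (α • g) = α • ((bW * bH * (bW - 1)) *ᵥ x) + bW *ᵥ (α • g)
      - α • ((bW * bH * bHstar⁻¹) *ᵥ (α • g)) := by
    rw [Matrix.mulVec_smul, Matrix.mulVec_smul, smul_comm μ α, heq2]
    simp only [Matrix.add_mulVec, Matrix.sub_mulVec, Matrix.smul_mulVec,
      smul_add, smul_sub]
    module
  rw [hg] at heq2'
  simp only [Matrix.mulVec_smul, Matrix.mulVec_sub, Matrix.sub_mulVec, Matrix.add_mulVec,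
    Matrix.smul_mulVec, Matrix.mulVec_mulVec, Matrix.one_mulVec, mul_sub, sub_mul,
    mul_one, one_mul, Matrix.mul_assoc, hcol, hSS', hc, hcomm2, sq, Matrix.smul_mul,
    Matrix.mul_smul, smul_sub, smul_smul, mul_one] at heq2' ⊢
  -- cancel the (-α⁻¹) smul on both sides

  linear_combination (norm := module) (α⁻¹ : ℂ) • heq2'
end

section
/- Let $0 < \lambda_2 < 1$ and set $\alpha_{\star} = 1 - \sqrt{\lambda_2}$. Then $\alpha_{\star}^2 + 4\alpha_{\star}\left(\frac{1}{\lambda_2} - 1\right) \ge 0$ and $\frac{\lambda_2}{2}\left(2 - \alpha_{\star} + \sqrt{\alpha_{\star}^2 + 4\alpha_{\star}\left(\frac{1}{\lambda_2} - 1\right)}\right) = \sqrt{\lambda_2} = 1 - \alpha_{\star}$; i.e., $\alpha_{\star} = 1 - \sqrt{\lambda_2}$ solves the step-size selection equation $1 - \alpha = \left|\frac{\lambda_2}{2}\left(2 - \alpha + \sqrt{\alpha^2 + 4\alpha\left(\frac{1}{\lambda_2} - 1\right)}\right)\right|$, and $\mu = \sqrt{\lambda_2}$ is the larger root of $\mu^2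 - \lambda_2(2 - \alpha_{\star})\mu + \lambda_2(\lambda_2 - \alpha_{\star}) = 0$. -/
/-- For `0 < λ₂ < 1` and `α⋆ = 1 - √λ₂`: the discriminant
`α⋆² + 4α⋆(1/λ₂ - 1)` is nonnegative; `(λ₂/2)(2 - α⋆ + √disc) = √λ₂ = 1 - α⋆`, so
`α⋆` solves the step-size selection equation `1 - α = |(λ₂/2)(2 - α + √disc)|`; and
`μ = √λ₂` is the larger root of `μ² - λ₂(2 - α⋆)μ + λ₂(λ₂ - α⋆) = 0`. -/
theorem stmt_8 (lam2 : ℝ) (h0 : 0 < lam2) (h1 : lam2 < 1) :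
    0 ≤ (1 - Real.sqrt lam2) ^ 2 + 4 * (1 - Real.sqrt lam2) * (1 / lam2 - 1) ∧
    lam2 / 2 * (2 - (1 - Real.sqrt lam2) +
        Real.sqrt ((1 - Real.sqrt lam2) ^ 2 + 4 * (1 - Real.sqrt lam2) * (1 / lam2 - 1)))
      = Real.sqrt lam2 ∧
    Real.sqrt lam2 = 1 - (1 - Real.sqrt lam2) ∧
    1 - (1 - Real.sqrt lam2)
      = |lam2 / 2 * (2 - (1 - Real.sqrt lam2) +
          Real.sqrt ((1 - Real.sqrt lam2) ^ 2 +
            4 * (1 - Real.sqrt lam2) * (1 / lam2 - 1)))| ∧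
    (Real.sqrt lam2) ^ 2 - lam2 * (2 - (1 - Real.sqrt lam2)) * Real.sqrt lam2 +
        lam2 * (lam2 - (1 - Real.sqrt lam2)) = 0 ∧
    lam2 / 2 * (2 - (1 - Real.sqrt lam2) -
        Real.sqrt ((1 - Real.sqrt lam2) ^ 2 + 4 * (1 - Real.sqrt lam2) * (1 / lam2 - 1)))
      ≤ Real.sqrt lam2 := by
  set s := Real.sqrt lam2 with hsdef
  have hs2 : s ^ 2 = lam2 := Real.sq_sqrt h0.le
  have hspos : 0 < s := Real.sqrt_pos.mpr h0
  have hs1 : s < 1 := by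
    nlinarith [hs2, hspos]
  have hdisc : (1 - s) ^ 2 + 4 * (1 - s) * (1 / lam2 - 1)
      = ((1 - s) * (s + 2) / s) ^ 2 := by
    rw [← hs2]; field_simp; ring
  have hq : 0 ≤ (1 - s) * (s + 2) / s :=
    div_nonneg (by nlinarith) hspos.le
  have hsq : Real.sqrt ((1 - s) ^ 2 + 4 * (1 - s) * (1 / lam2 - 1))
      = (1 - s) * (s + 2) / s := by
    rw [hdisc, Real.sqrt_sq hq]
  have hnn : 0 ≤ (1 - s) ^ 2 + 4 * (1 - s) * (1 / lam2 - 1) := by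
    rw [hdisc]; positivity
  have heq : lam2 / 2 * (2 - (1 - s) +
      Real.sqrt ((1 - s) ^ 2 + 4 * (1 - s) * (1 / lam2 - 1))) = s := by
    rw [hsq, ← hs2]; field_simp; ring
  have hcancel : (1 - s) * (s + 2) / s * s = (1 - s) * (s + 2) :=
    div_mul_cancel₀ _ hspos.ne'
  refine ⟨hnn, heq, by ring, ?_, ?_, ?_⟩
  · rw [heq, abs_of_nonneg hspos.le]; ring
  · rw [← hs2]; ring
  · rw [hsq, ← hs2]
    nlinarith [hspos, hs1, hcancel]
end

section
/- Under the same setup as Lemma 4 (functions $f^i$ with $\|\nabla^2 f^i(x)\| \le \gamma$ and $\delta$-Lipschitz Hessians in Frobenius norm, doubly stochastic $W$, distributed Newton recursions $\mathbf{x}_{k+1} = \mathbf{W}\mathbf{x}_k - \alpha_k\mathbf{B}_k^{-1}\mathbf{g}_k$, $\mathbf{g}_{k+1} = \mathbf{W}[\mathbf{g}_k + \mathfrak{g}(\mathbf{x}_{k+1}) - \mathfrak{g}(\mathbf{x}_k)]$, $\mathbf{h}_{k+1} = \mathbf{W}[\mathbf{h}_k + \mathfrak{h}(\mathbf{x}_{k+1})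 - \mathfrak{h}(\mathbf{x}_k)]$, common step size $\alpha_k \ge 0$), set $\eta = \|\mathbf{I} - W\|$, $\upsilon = \|A - W\|$ (operator norms), and $G_k = \|\bar{\mathfrak{g}}(\bar{\mathbf{x}}_k)\|$. Then for every $k$, the consensus errors satisfy the one-step bounds: (i) $\|\tilde{\mathbf{x}}_{k+1}\| \le \upsilon\|\tilde{\mathbf{x}}_k\| + \alpha_k\beta\|\mathbf{g}_k\|$; (ii) $\|\tilde{\mathbf{g}}_{k+1}\| \le \upsilon\big(\|\tilde{\mathbf{g}}_k\| + \gamma\eta\|\tilde{\mathbf{x}}_k\| + \alpha_k\gamma\beta\|\mathbf{g}_k\|\big)$; (iii) $\|\tilde{\mathbf{h}}_{k+1}\|_{\mathrm{F}} \le \upsilon\big(\|\tilde{\mathbf{h}}_k\|_{\mathrm{F}} + \delta\eta\|\tilde{\mathbf{x}}_k\| + \alpha_k\delta\beta\|\mathbf{g}_k\|\big)$; where in each bound $\|\mathbf{g}_k\| \le G_k + \gamma\|\tilde{\mathbf{x}}_k\| + \|\tilde{\mathbf{g}}_k\|$. -/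
open Matrix

/-- Euclidean (`2`-) norm of a vector in `ℝ^N`. -/
noncomputable def vecNorm {N : ℕ} (v : Fin N → ℝ) : ℝ :=
  Real.sqrt (v ⬝ᵥ v)

/-- `ℓ²` norm of a stacked vector in `(ℝ^N)^I`. -/
noncomputable def stackNorm {I N : ℕ} (x : Fin I → Fin N → ℝ) : ℝ :=
  Real.sqrt (∑ i, x i ⬝ᵥ x i)

/-- `ℓ²` (Frobenius-type) norm of a stacked family of matrices. -/
noncomputable def stackFrobNorm {I N : ℕ} (h : Fin I → Matrix (Fin N) (Fin N) ℝ) : ℝ :=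
  Real.sqrt (∑ i, ∑ a, ∑ b, (h i a b) ^ 2)

/-- The eigenvalue-flooring map `B`: for a symmetric matrix `H = UΛUᵀ`, replace each
eigenvalue `λᵢ` by `max (λᵢ) β⁻¹`. (On non-symmetric matrices it is the identity.) -/
noncomputable def floorMap {N : ℕ} (β : ℝ) (H : Matrix (Fin N) (Fin N) ℝ) :
    Matrix (Fin N) (Fin N) ℝ :=
  if h : H.IsHermitian then
    (h.eigenvectorUnitary : Matrix (Fin N) (Fin N) ℝ) *
      Matrix.diagonal (fun i => max (h.eigenvalues i) β⁻¹) *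
      star (h.eigenvectorUnitary : Matrix (Fin N) (Fin N) ℝ)
  else H

/-!
Write `x̃ = (I - A) x`. For doubly stochastic `W` one has `(I - A) W = (W - A)(I - A)` and
`W - I = (W - I)(I - A)`, and a matrix `M` acting blockwise on a stack (i.e. `M ⊗ I_N`) has
Euclidean operator norm at most `‖M‖`, as one sees by applying it column by column. So each
consensus error contracts by `υ` up to the new local information injected in the step, and that
information is controlled through the `γ`-Lipschitz gradients and `δ`-Lipschitz Hessians by
`‖x_{k+1} - x_k‖ ≤ η ‖x̃_k‖ + α_k β ‖g_k‖`. Here `‖B_k⁻¹‖ ≤ β` needs the tracked Hessians to stay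
symmetric, which they do as averages of symmetric Hessians. The bound on `‖g_k‖` comes from
gradient tracking, `∑ᵢ gᵢ_k = ∑ᵢ ∇fⁱ(xᵢ_k)`.
-/

theorem sqrt_le_mul_sqrt_iff {u v c : ℝ} (hc : 0 ≤ c) (hv : 0 ≤ v) :
    √u ≤ c * √v ↔ u ≤ c ^ 2 * v := by
  rw [← Real.sqrt_sq hc, ← Real.sqrt_mul (sq_nonneg c), Real.sqrt_sq hc,
    Real.sqrt_le_sqrt_iff (by positivity)]

section StackNorm

variable {I : ℕ} {κ : Type*} [Fintype κ]

/-- `stackNorm` for an arbitrary block index type, e.g. `Fin N × Fin N` for flattened matrices. -/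
noncomputable def stackL2 (x : Fin I → κ → ℝ) : ℝ :=
  √(∑ i, x i ⬝ᵥ x i)

theorem dotProduct_self_eq_sum_sq (v : κ → ℝ) : v ⬝ᵥ v = ∑ a, v a ^ 2 := by
  simp only [dotProduct, sq]

theorem dotProduct_self_nonneg (v : κ → ℝ) : 0 ≤ v ⬝ᵥ v :=
  Fintype.sum_nonneg fun _ => mul_self_nonneg _

theorem stackL2_eq_norm (x : Fin I → κ → ℝ) :
    stackL2 x = ‖(WithLp.toLp 2 (Function.uncurry x) : EuclideanSpace ℝ (Fin I × κ))‖ := by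
  simp [stackL2, EuclideanSpace.norm_eq, dotProduct_self_eq_sum_sq, Fintype.sum_prod_type]

theorem stackL2_add_le (x y : Fin I → κ → ℝ) : stackL2 (x + y) ≤ stackL2 x + stackL2 y := by
  simp only [stackL2_eq_norm]
  exact norm_add_le (E := EuclideanSpace ℝ (Fin I × κ)) (WithLp.toLp 2 (Function.uncurry x))
    (WithLp.toLp 2 (Function.uncurry y))

theorem stackL2_sub_le (x y : Fin I → κ → ℝ) : stackL2 (x - y) ≤ stackL2 x + stackL2 y := by
  simp only [stackL2_eq_norm]
  exact norm_sub_le (E := EuclideanSpace ℝ (Fin I × κ)) (WithLp.toLp 2 (Function.uncurry x))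
    (WithLp.toLp 2 (Function.uncurry y))

theorem stackL2_smul (c : ℝ) (x : Fin I → κ → ℝ) : stackL2 (c • x) = |c| * stackL2 x := by
  simp only [stackL2_eq_norm]
  exact norm_smul c (WithLp.toLp 2 (Function.uncurry x) : EuclideanSpace ℝ (Fin I × κ))

theorem stackL2_le_mul_of_sum_le {κ' : Type*} [Fintype κ'] {x : Fin I → κ → ℝ}
    {y : Fin I → κ' → ℝ} {c : ℝ} (hc : 0 ≤ c)
    (h : ∑ i, x i ⬝ᵥ x i ≤ c ^ 2 * ∑ i, y i ⬝ᵥ y i) : stackL2 x ≤ c * stackL2 y :=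
  (sqrt_le_mul_sqrt_iff hc (Finset.sum_nonneg fun i _ => dotProduct_self_nonneg (y i))).2 h

theorem stackL2_le_mul_of_forall {κ' : Type*} [Fintype κ'] {x : Fin I → κ → ℝ}
    {y : Fin I → κ' → ℝ} {c : ℝ} (hc : 0 ≤ c)
    (h : ∀ i, √(x i ⬝ᵥ x i) ≤ c * √(y i ⬝ᵥ y i)) : stackL2 x ≤ c * stackL2 y := by
  refine stackL2_le_mul_of_sum_le hc ?_
  rw [Finset.mul_sum]
  exact Finset.sum_le_sum fun i _ => (sqrt_le_mul_sqrt_iff hc (dotProduct_self_nonneg _)).1 (h i)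

theorem stackL2_mix_le (M : Matrix (Fin I) (Fin I) ℝ) (x : Fin I → κ → ℝ) :
    stackL2 (fun i => ∑ j, M i j • x j) ≤ ‖toEuclideanCLM (𝕜 := ℝ) (n := Fin I) M‖ * stackL2 x := by
  set col : (Fin I → κ → ℝ) → κ → EuclideanSpace ℝ (Fin I) :=
    fun z a => WithLp.toLp 2 fun i => z i a
  have hcol : ∀ z : Fin I → κ → ℝ, ∑ i, z i ⬝ᵥ z i = ∑ a, ‖col z a‖ ^ 2 := fun z => by
    simp only [col, EuclideanSpace.real_norm_sq_eq, dotProduct_self_eq_sum_sq]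
    exact Finset.sum_comm
  have hmix : ∀ a, col (fun i => ∑ j, M i j • x j) a = toEuclideanCLM (𝕜 := ℝ) M (col x a) := by
    intro a
    ext i
    simp [col, Matrix.mulVec, dotProduct, Finset.sum_apply]
  refine stackL2_le_mul_of_sum_le (norm_nonneg _) ?_
  rw [hcol, hcol, Finset.mul_sum]
  refine Finset.sum_le_sum fun a _ => ?_
  rw [hmix, ← mul_pow]
  exact pow_le_pow_left₀ (norm_nonneg _) (ContinuousLinearMap.le_opNorm _ _) 2

theorem vec_dotProduct_vec_self {m n : Type*} [Fintype m] [Fintype n] (A : Matrix m n ℝ) :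
    A.vec ⬝ᵥ A.vec = ∑ a, ∑ b, A a b ^ 2 := by
  rw [dotProduct_self_eq_sum_sq, Fintype.sum_prod_type, Finset.sum_comm]
  rfl

theorem stackFrobNorm_eq_stackL2_vec {N : ℕ} (h : Fin I → Matrix (Fin N) (Fin N) ℝ) :
    stackFrobNorm h = stackL2 fun i => (h i).vec := by
  simp only [stackFrobNorm, stackL2, vec_dotProduct_vec_self]

theorem stackL2_vec_sub_le {N : ℕ} {H : Fin I → (Fin N → ℝ) → Matrix (Fin N) (Fin N) ℝ} {δ : ℝ}
    (hδ : 0 ≤ δ)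
    (hH : ∀ i a b, √(∑ p, ∑ q, (H i a p q - H i b p q) ^ 2) ≤ δ * vecNorm (a - b))
    (y z : Fin I → Fin N → ℝ) :
    stackL2 ((fun j => (H j (y j)).vec) - fun j => (H j (z j)).vec) ≤ δ * stackL2 (y - z) :=
  stackL2_le_mul_of_forall hδ fun j => by
    simpa only [Pi.sub_apply, ← vec_sub, vec_dotProduct_vec_self, Matrix.sub_apply, vecNorm]
      using hH j (y j) (z j)

end StackNorm

section Consensus

variable {I : ℕ} {E : Type*} [AddCommGroup E] [Module ℝ E]

/-- The paper's `x̃ = (I - A) x`. -/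
noncomputable def consensusError : (Fin I → E) →ₗ[ℝ] Fin I → E where
  toFun x i := x i - (I : ℝ)⁻¹ • ∑ j, x j
  map_add' x y := by
    ext i
    simp only [Pi.add_apply, Finset.sum_add_distrib, smul_add]
    abel
  map_smul' c x := by
    ext i
    simp only [Pi.smul_apply, RingHom.id_apply, ← Finset.smul_sum, smul_sub, smul_comm c]

/-- The paper's `A = 𝟏𝟏ᵀ / I`. -/
noncomputable def avgMatrix (I : ℕ) : Matrix (Fin I) (Fin I) ℝ :=
  Matrix.of fun _ _ => (I : ℝ)⁻¹

theorem consensusError_apply (x : Fin I → E) (i : Fin I) :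
    consensusError x i = x i - (I : ℝ)⁻¹ • ∑ j, x j := rfl

theorem sum_smul_consensusError_of_sum_eq_zero {M : Matrix (Fin I) (Fin I) ℝ} {i : Fin I}
    (hM : ∑ j, M i j = 0) (x : Fin I → E) :
    ∑ j, M i j • consensusError x j = ∑ j, M i j • x j := by
  simp only [consensusError_apply, smul_sub, Finset.sum_sub_distrib, ← Finset.sum_smul, hM,
    zero_smul, sub_zero]

theorem sum_sum_smul_of_sum_col_eq_one {W : Matrix (Fin I) (Fin I) ℝ}
    (hcol : ∀ j, ∑ i, W i j = 1) (x : Fin I → E) :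
    ∑ i, ∑ j, W i j • x j = ∑ j, x j := by
  rw [Finset.sum_comm]
  simp only [← Finset.sum_smul, hcol, one_smul]

theorem consensusError_mix {W : Matrix (Fin I) (Fin I) ℝ} (hrow : ∀ i, ∑ j, W i j = 1)
    (hcol : ∀ j, ∑ i, W i j = 1) (x : Fin I → E) :
    consensusError (fun i => ∑ j, W i j • x j) =
      fun i => ∑ j, (W - avgMatrix I) i j • consensusError x j := by
  ext i
  have hI : (I : ℝ) ≠ 0 := Nat.cast_ne_zero.2 (Fin.pos i).ne'
  rw [sum_smul_consensusError_of_sum_eq_zero, consensusError_apply,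
    sum_sum_smul_of_sum_col_eq_one hcol]
  · simp [avgMatrix, sub_smul, Finset.sum_sub_distrib, Finset.smul_sum]
  · simp [avgMatrix, Finset.sum_sub_distrib, hrow i, hI]

theorem mix_sub_self {W : Matrix (Fin I) (Fin I) ℝ} (hrow : ∀ i, ∑ j, W i j = 1)
    (x : Fin I → E) :
    (fun i => ∑ j, W i j • x j - x i) = fun i => ∑ j, (W - 1) i j • consensusError x j := by
  ext i
  rw [sum_smul_consensusError_of_sum_eq_zero]
  · simp [sub_smul, Finset.sum_sub_distrib, Matrix.one_apply, ite_smul]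
  · simp [Finset.sum_sub_distrib, hrow i, Matrix.one_apply]

theorem vec_consensusError {m n : Type*} (h : Fin I → Matrix m n ℝ) :
    (fun i => (consensusError h i).vec) = consensusError fun i => (h i).vec := by
  ext i : 1
  simp only [consensusError_apply, vec_sub, vec_smul, vec_sum]

end Consensus

section ConsensusNorm

variable {I : ℕ} {κ : Type*} [Fintype κ]

theorem sum_dotProduct_consensusError_add (x : Fin I → κ → ℝ) :
    ∑ i, consensusError x i ⬝ᵥ consensusError x i +
        I * (((I : ℝ)⁻¹ • ∑ j, x j) ⬝ᵥ ((I : ℝ)⁻¹ • ∑ j, x j)) = ∑ i, x i ⬝ᵥ x i := by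
  rcases Nat.eq_zero_or_pos I with rfl | hI
  · simp
  simp only [consensusError_apply]
  have hsum : ∑ j, x j = (I : ℝ) • ((I : ℝ)⁻¹ • ∑ j, x j) := by simp [smul_smul, hI.ne']
  generalize (I : ℝ)⁻¹ • ∑ j, x j = m at hsum ⊢
  simp only [sub_dotProduct, dotProduct_sub, Finset.sum_sub_distrib, ← sum_dotProduct, hsum,
    smul_dotProduct, Finset.sum_const, Finset.card_univ, Fintype.card_fin, dotProduct_comm m]
  simp only [nsmul_eq_mul, smul_eq_mul]
  ring

theorem stackL2_consensusError_le (x : Fin I → κ → ℝ) :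
    stackL2 (consensusError x) ≤ stackL2 x := by
  refine Real.sqrt_le_sqrt ?_
  rw [← sum_dotProduct_consensusError_add x, le_add_iff_nonneg_right]
  exact mul_nonneg (Nat.cast_nonneg I) (dotProduct_self_nonneg _)

theorem stackL2_const_mean_le (x : Fin I → κ → ℝ) :
    stackL2 (fun _ : Fin I => (I : ℝ)⁻¹ • ∑ j, x j) ≤ stackL2 x := by
  refine Real.sqrt_le_sqrt ?_
  rw [← sum_dotProduct_consensusError_add x, Finset.sum_const, Finset.card_univ,
    Fintype.card_fin, nsmul_eq_mul, le_add_iff_nonneg_left]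
  exact Finset.sum_nonneg fun i _ => dotProduct_self_nonneg _

theorem stackL2_consensusError_mix_le {W : Matrix (Fin I) (Fin I) ℝ}
    (hrow : ∀ i, ∑ j, W i j = 1) (hcol : ∀ j, ∑ i, W i j = 1) (x : Fin I → κ → ℝ) :
    stackL2 (consensusError fun i => ∑ j, W i j • x j) ≤
      ‖toEuclideanCLM (𝕜 := ℝ) (n := Fin I) (avgMatrix I - W)‖ * stackL2 (consensusError x) := by
  rw [consensusError_mix hrow hcol, ← norm_neg, ← map_neg, neg_sub]
  exact stackL2_mix_le _ _

theorem stackL2_mix_sub_self_le {W : Matrix (Fin I) (Fin I) ℝ}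
    (hrow : ∀ i, ∑ j, W i j = 1) (x : Fin I → κ → ℝ) :
    stackL2 (fun i => ∑ j, W i j • x j - x i) ≤
      ‖toEuclideanCLM (𝕜 := ℝ) (n := Fin I) (1 - W)‖ * stackL2 (consensusError x) := by
  rw [mix_sub_self hrow, ← norm_neg, ← map_neg, neg_sub]
  exact stackL2_mix_le _ _

theorem stackL2_le_const_mean_add {N : ℕ} {G : Fin I → (Fin N → ℝ) → Fin N → ℝ} {γ : ℝ}
    (hγ : 0 ≤ γ) (hG : ∀ i a b, vecNorm (G i a - G i b) ≤ γ * vecNorm (a - b))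
    (x g : Fin I → Fin N → ℝ) (hsum : ∑ j, g j = ∑ j, G j (x j)) :
    stackL2 g ≤ stackL2 (fun _ : Fin I => (I : ℝ)⁻¹ • ∑ j, G j ((I : ℝ)⁻¹ • ∑ j, x j)) +
      γ * stackL2 (consensusError x) + stackL2 (consensusError g) := by
  set xbar := (I : ℝ)⁻¹ • ∑ j, x j
  have hdec : g = (fun _ : Fin I => (I : ℝ)⁻¹ • ∑ j, G j xbar) +
      (fun _ : Fin I => (I : ℝ)⁻¹ • ∑ j, (G j (x j) - G j xbar)) + consensusError g := by
    ext i : 1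
    simp only [Pi.add_apply, consensusError_apply, hsum, Finset.sum_sub_distrib, smul_sub]
    abel
  have hlip : stackL2 (fun _ : Fin I => (I : ℝ)⁻¹ • ∑ j, (G j (x j) - G j xbar)) ≤
      γ * stackL2 (consensusError x) :=
    (stackL2_const_mean_le _).trans (stackL2_le_mul_of_forall hγ fun j => hG j (x j) xbar)
  calc stackL2 g ≤ _ := hdec ▸ stackL2_add_le _ _
    _ ≤ _ := add_le_add (stackL2_add_le _ _) le_rfl
    _ ≤ _ := by linarith

end ConsensusNorm

section Hessian

variable {N : ℕ}

theorem vecNorm_eq_norm (v : Fin N → ℝ) :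
    vecNorm v = ‖(WithLp.toLp 2 v : EuclideanSpace ℝ (Fin N))‖ := by
  rw [EuclideanSpace.norm_eq, vecNorm, dotProduct_self_eq_sum_sq]
  simp

theorem vecNorm_sub_le_of_fderiv_le {g : (Fin N → ℝ) → Fin N → ℝ} (hg : Differentiable ℝ g)
    {C : ℝ} (hC : 0 ≤ C) (h : ∀ z v, vecNorm (fderiv ℝ g z v) ≤ C * vecNorm v)
    (a b : Fin N → ℝ) : vecNorm (g a - g b) ≤ C * vecNorm (a - b) := by
  let e := PiLp.continuousLinearEquiv 2 ℝ fun _ : Fin N => ℝ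
  let F' : EuclideanSpace ℝ (Fin N) → EuclideanSpace ℝ (Fin N) →L[ℝ] EuclideanSpace ℝ (Fin N) :=
    fun z => (e.symm : (Fin N → ℝ) →L[ℝ] _).comp ((fderiv ℝ g (e z)).comp (e : _ →L[ℝ] _))
  have hF : ∀ z, HasFDerivAt (fun z => e.symm (g (e z))) (F' z) z := fun z =>
    e.symm.hasFDerivAt.comp z ((hg (e z)).hasFDerivAt.comp z e.hasFDerivAt)
  have hF' : ∀ z, ‖F' z‖ ≤ C := fun z =>
    ContinuousLinearMap.opNorm_le_bound _ hC fun w => by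
      simpa [F', e, vecNorm_eq_norm, PiLp.coe_continuousLinearEquiv,
        PiLp.coe_symm_continuousLinearEquiv] using h (e z) (e w)
  have := Convex.norm_image_sub_le_of_norm_hasFDerivWithin_le
    (fun z _ => (hF z).hasFDerivWithinAt) (fun z _ => hF' z) convex_univ
    (Set.mem_univ (e.symm b)) (Set.mem_univ (e.symm a))
  simpa [e, vecNorm_eq_norm, PiLp.coe_continuousLinearEquiv,
    PiLp.coe_symm_continuousLinearEquiv] using this

variable {f : (Fin N → ℝ) → ℝ} {Gf : (Fin N → ℝ) → Fin N → ℝ}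
  {Hf : (Fin N → ℝ) → Matrix (Fin N) (Fin N) ℝ}

noncomputable def gradientCoords (N : ℕ) : ((Fin N → ℝ) →L[ℝ] ℝ) →L[ℝ] Fin N → ℝ :=
  ContinuousLinearMap.pi fun a => ContinuousLinearMap.apply ℝ ℝ (Pi.single a 1)

theorem gradient_eq_comp (hGf : ∀ xv v, fderiv ℝ f xv v = Gf xv ⬝ᵥ v) :
    Gf = gradientCoords N ∘ fderiv ℝ f := by
  ext z a
  simp [gradientCoords, hGf]

theorem differentiable_gradient (hf : ContDiff ℝ 2 f)
    (hGf : ∀ xv v, fderiv ℝ f xv v = Gf xv ⬝ᵥ v) : Differentiable ℝ Gf := by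
  rw [gradient_eq_comp hGf]
  exact (gradientCoords N).differentiable.comp
    ((hf.fderiv_right (m := 1) (by norm_num)).differentiable one_ne_zero)

theorem hessian_apply_eq_fderiv_fderiv (hf : ContDiff ℝ 2 f)
    (hGf : ∀ xv v, fderiv ℝ f xv v = Gf xv ⬝ᵥ v)
    (hHf : ∀ xv v, fderiv ℝ Gf xv v = Hf xv *ᵥ v) (xv : Fin N → ℝ) (a b : Fin N) :
    Hf xv a b = fderiv ℝ (fderiv ℝ f) xv (Pi.single b 1) (Pi.single a 1) := by
  have hd : DifferentiableAt ℝ (fderiv ℝ f) xv :=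
    (hf.fderiv_right (m := 1) (by norm_num)).differentiable one_ne_zero xv
  have hG : fderiv ℝ Gf xv = (gradientCoords N).comp (fderiv ℝ (fderiv ℝ f) xv) := by
    rw [gradient_eq_comp hGf]
    exact ((gradientCoords N).hasFDerivAt.comp xv hd.hasFDerivAt).fderiv
  have := congrFun (hHf xv (Pi.single b 1)) a
  rw [hG, mulVec_single_one] at this
  simpa [gradientCoords] using this.symm

theorem hessian_isHermitian (hf : ContDiff ℝ 2 f) (hGf : ∀ xv v, fderiv ℝ f xv v = Gf xv ⬝ᵥ v)
    (hHf : ∀ xv v, fderiv ℝ Gf xv v = Hf xv *ᵥ v) (xv : Fin N → ℝ) : (Hf xv).IsHermitian := by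
  ext a b
  rw [conjTranspose_apply, star_trivial, hessian_apply_eq_fderiv_fderiv hf hGf hHf,
    hessian_apply_eq_fderiv_fderiv hf hGf hHf,
    (hf.contDiffAt.isSymmSndFDerivAt (by simp)).eq]

theorem vecNorm_gradient_sub_le (hf : ContDiff ℝ 2 f)
    (hGf : ∀ xv v, fderiv ℝ f xv v = Gf xv ⬝ᵥ v) (hHf : ∀ xv v, fderiv ℝ Gf xv v = Hf xv *ᵥ v)
    {γ : ℝ} (hγ : 0 ≤ γ) (hHbd : ∀ xv v, vecNorm (Hf xv *ᵥ v) ≤ γ * vecNorm v)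
    (a b : Fin N → ℝ) : vecNorm (Gf a - Gf b) ≤ γ * vecNorm (a - b) :=
  vecNorm_sub_le_of_fderiv_le (differentiable_gradient hf hGf) hγ
    (fun z v => (hHf z v).symm ▸ hHbd z v) a b

end Hessian

section FloorMap

variable {N : ℕ}

theorem vecNorm_mulVec_of_mem_unitaryGroup {U : Matrix (Fin N) (Fin N) ℝ}
    (hU : U ∈ unitaryGroup (Fin N) ℝ) (w : Fin N → ℝ) : vecNorm (U *ᵥ w) = vecNorm w := by
  have hUU : Uᵀ * U = 1 := by
    rw [← conjTranspose_eq_transpose_of_trivial]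
    exact mem_unitaryGroup_iff'.1 hU
  rw [vecNorm, vecNorm, dotProduct_mulVec, ← mulVec_transpose, mulVec_mulVec, hUU, one_mulVec]

theorem vecNorm_diagonal_mulVec_le {d : Fin N → ℝ} {c : ℝ} (hc : 0 ≤ c) (hd : ∀ i, |d i| ≤ c)
    (w : Fin N → ℝ) : vecNorm (diagonal d *ᵥ w) ≤ c * vecNorm w := by
  rw [vecNorm, vecNorm, sqrt_le_mul_sqrt_iff hc (dotProduct_self_nonneg w),
    dotProduct_self_eq_sum_sq, dotProduct_self_eq_sum_sq, Finset.mul_sum]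
  refine Finset.sum_le_sum fun i _ => ?_
  rw [mulVec_diagonal, mul_pow, ← sq_abs (d i)]
  exact mul_le_mul_of_nonneg_right (pow_le_pow_left₀ (abs_nonneg _) (hd i) 2) (sq_nonneg _)

theorem vecNorm_floorMap_inv_mulVec_le {β : ℝ} (hβ : 0 < β) {H : Matrix (Fin N) (Fin N) ℝ}
    (hH : H.IsHermitian) (v : Fin N → ℝ) :
    vecNorm ((floorMap β H)⁻¹ *ᵥ v) ≤ β * vecNorm v := by
  set U : Matrix (Fin N) (Fin N) ℝ := (hH.eigenvectorUnitary : Matrix (Fin N) (Fin N) ℝ)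
  set d : Fin N → ℝ := fun i => max (hH.eigenvalues i) β⁻¹
  have hU : U ∈ unitaryGroup (Fin N) ℝ := hH.eigenvectorUnitary.2
  have hd : ∀ i, β⁻¹ ≤ d i := fun i => le_max_right _ _
  have hd0 : ∀ i, 0 < d i := fun i => (inv_pos.2 hβ).trans_le (hd i)
  have hinv : (floorMap β H)⁻¹ = U * diagonal (fun i => (d i)⁻¹) * star U := by
    rw [floorMap, dif_pos hH]
    refine inv_eq_right_inv ?_
    calc U * diagonal d * star U * (U * diagonal (fun i => (d i)⁻¹) * star U)
        = U * (diagonal d * (star U * U) * diagonal (fun i => (d i)⁻¹)) * star U := by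
          simp only [Matrix.mul_assoc]
      _ = 1 := by
          rw [mem_unitaryGroup_iff'.1 hU, Matrix.mul_one, diagonal_mul_diagonal]
          simp [fun i => (hd0 i).ne', mem_unitaryGroup_iff.1 hU]
  have hdinv : ∀ i, |(d i)⁻¹| ≤ β := fun i => by
    rw [abs_of_pos (inv_pos.2 (hd0 i))]
    exact inv_le_of_inv_le₀ hβ (hd i)
  rw [hinv, ← mulVec_mulVec, ← mulVec_mulVec, vecNorm_mulVec_of_mem_unitaryGroup hU,
    ← vecNorm_mulVec_of_mem_unitaryGroup (Unitary.star_mem hU) v]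
  exact vecNorm_diagonal_mulVec_le hβ.le hdinv _

end FloorMap

section Tracking

variable {I : ℕ} {W : Matrix (Fin I) (Fin I) ℝ}

theorem sum_eq_of_tracking {E : Type*} [AddCommGroup E] [Module ℝ E]
    (hcol : ∀ j, ∑ i, W i j = 1) {y φ : ℕ → Fin I → E} (hinit : y 1 = φ 1)
    (hrec : ∀ k ≥ 1, y (k + 1) = fun i => ∑ j, W i j • (y k j + φ (k + 1) j - φ k j)) :
    ∀ k ≥ 1, ∑ j, y k j = ∑ j, φ k j := by
  intro k hk
  induction k, hk using Nat.le_induction with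
  | base => rw [hinit]
  | succ k hk ih =>
    rw [hrec k hk, sum_sum_smul_of_sum_col_eq_one hcol, Finset.sum_sub_distrib,
      Finset.sum_add_distrib, ih]
    abel

theorem isHermitian_of_tracking {N : ℕ} {H φ : ℕ → Fin I → Matrix (Fin N) (Fin N) ℝ}
    (hφ : ∀ k j, (φ k j).IsHermitian) (hinit : H 1 = φ 1)
    (hrec : ∀ k ≥ 1, H (k + 1) = fun i => ∑ j, W i j • (H k j + φ (k + 1) j - φ k j)) :
    ∀ k ≥ 1, ∀ i, (H k i).IsHermitian := by
  intro k hk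
  induction k, hk using Nat.le_induction with
  | base => simpa [hinit] using hφ 1
  | succ k hk ih =>
    intro i
    rw [hrec k hk]
    refine (isSelfAdjoint_sum _ fun j _ => ?_).isHermitian
    exact ((((ih j).add (hφ _ j)).sub (hφ k j)).smul (IsSelfAdjoint.all (W i j))).isSelfAdjoint

variable {κ : Type*} [Fintype κ]

theorem stackL2_consensusError_tracking_le (hrow : ∀ i, ∑ j, W i j = 1)
    (hcol : ∀ j, ∑ i, W i j = 1) (y u v : Fin I → κ → ℝ) {b : ℝ} (huv : stackL2 (u - v) ≤ b) :
    stackL2 (consensusError fun i => ∑ j, W i j • (y j + u j - v j)) ≤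
      ‖toEuclideanCLM (𝕜 := ℝ) (n := Fin I) (avgMatrix I - W)‖ *
        (stackL2 (consensusError y) + b) := by
  have hsplit : (fun j => y j + u j - v j) = y + (u - v) := by
    ext j
    simp [add_sub_assoc]
  refine (stackL2_consensusError_mix_le hrow hcol _).trans
    (mul_le_mul_of_nonneg_left ?_ (norm_nonneg _))
  rw [hsplit, map_add]
  exact (stackL2_add_le _ _).trans (add_le_add le_rfl ((stackL2_consensusError_le _).trans huv))

theorem stackL2_consensusError_descent_le (hrow : ∀ i, ∑ j, W i j = 1)
    (hcol : ∀ j, ∑ i, W i j = 1) (x e : Fin I → κ → ℝ) (c : ℝ) :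
    stackL2 (consensusError fun i => ∑ j, W i j • x j - c • e i) ≤
      ‖toEuclideanCLM (𝕜 := ℝ) (n := Fin I) (avgMatrix I - W)‖ * stackL2 (consensusError x) +
        |c| * stackL2 e := by
  have hsplit : (fun i => ∑ j, W i j • x j - c • e i) = (fun i => ∑ j, W i j • x j) - c • e :=
    rfl
  rw [hsplit, map_sub, map_smul]
  refine (stackL2_sub_le _ _).trans (add_le_add (stackL2_consensusError_mix_le hrow hcol x) ?_)
  rw [stackL2_smul]
  exact mul_le_mul_of_nonneg_left (stackL2_consensusError_le e) (abs_nonneg c)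

theorem stackL2_descent_sub_le (hrow : ∀ i, ∑ j, W i j = 1) (x e : Fin I → κ → ℝ) (c : ℝ) :
    stackL2 ((fun i => ∑ j, W i j • x j - c • e i) - x) ≤
      ‖toEuclideanCLM (𝕜 := ℝ) (n := Fin I) (1 - W)‖ * stackL2 (consensusError x) +
        |c| * stackL2 e := by
  have hsplit : (fun i => ∑ j, W i j • x j - c • e i) - x =
      (fun i => ∑ j, W i j • x j - x i) - c • e := by
    ext i
    simp only [Pi.sub_apply, Pi.smul_apply]
    abel
  rw [hsplit, ← stackL2_smul]
  exact (stackL2_sub_le _ _).trans (add_le_add (stackL2_mix_sub_self_le hrow x) le_rfl)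

end Tracking

theorem stmt_17_general {I N : ℕ}
    (f : Fin I → (Fin N → ℝ) → ℝ)
    (Gf : Fin I → (Fin N → ℝ) → (Fin N → ℝ))
    (Hf : Fin I → (Fin N → ℝ) → Matrix (Fin N) (Fin N) ℝ)
    (hC2 : ∀ i, ContDiff ℝ 2 (f i))
    (hGf : ∀ i xv v, fderiv ℝ (f i) xv v = Gf i xv ⬝ᵥ v)
    (hHf : ∀ i xv v, fderiv ℝ (Gf i) xv v = Hf i xv *ᵥ v)
    (W : Matrix (Fin I) (Fin I) ℝ)
    (hW_row : ∀ i, ∑ j, W i j = 1)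
    (hW_col : ∀ j, ∑ i, W i j = 1)
    (β γ δ : ℝ) (hβ : 0 < β) (hγ : 0 < γ) (hδ : 0 < δ)
    -- `‖∇²fⁱ(x)‖ ≤ γ` (operator norm bound)
    (hHbd : ∀ i xv v, vecNorm (Hf i xv *ᵥ v) ≤ γ * vecNorm v)
    -- `‖∇²fⁱ(x) - ∇²fⁱ(y)‖_F ≤ δ‖x - y‖`
    (hHlip : ∀ i xv yv,
      Real.sqrt (∑ a, ∑ b, (Hf i xv a b - Hf i yv a b) ^ 2) ≤ δ * vecNorm (xv - yv))
    (α : ℕ → ℝ) (hα : ∀ k ≥ 1, 0 ≤ α k)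
    (x g : ℕ → Fin I → (Fin N → ℝ))
    (hmat : ℕ → Fin I → Matrix (Fin N) (Fin N) ℝ)
    (hginit : g 1 = fun i => Gf i (x 1 i))
    (hhinit : hmat 1 = fun i => Hf i (x 1 i))
    (hxrec : ∀ k ≥ 1, x (k + 1) = fun i =>
      (∑ j, W i j • x k j) - α k • ((floorMap β (hmat k i))⁻¹ *ᵥ g k i))
    (hgrec : ∀ k ≥ 1, g (k + 1) = fun i =>
      ∑ j, W i j • (g k j + Gf j (x (k + 1) j) - Gf j (x k j)))
    (hhrec : ∀ k ≥ 1, hmat (k + 1) = fun i =>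
      ∑ j, W i j • (hmat k j + Hf j (x (k + 1) j) - Hf j (x k j)))
    -- derived quantities
    (barx : ℕ → Fin N → ℝ) (hbarx : ∀ k, barx k = (I : ℝ)⁻¹ • ∑ i, x k i)
    (tx tg th G : ℕ → ℝ)
    (htx : ∀ k, tx k = stackNorm (fun i => x k i - barx k))
    (htg : ∀ k, tg k = stackNorm (fun i => g k i - (I : ℝ)⁻¹ • ∑ j, g k j))
    (hth : ∀ k, th k = stackFrobNorm (fun i => hmat k i - (I : ℝ)⁻¹ • ∑ j, hmat k j))
    (hG : ∀ k, G k = stackNorm (fun _ : Fin I => (I : ℝ)⁻¹ • ∑ j, Gf j (barx k)))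
    -- operator norms `η = ‖I - W‖`, `υ = ‖A - W‖`
    (η υ : ℝ)
    (hη : η = ‖Matrix.toEuclideanCLM (𝕜 := ℝ) (n := Fin I) (1 - W)‖)
    (hυ : υ = ‖Matrix.toEuclideanCLM (𝕜 := ℝ) (n := Fin I)
      ((Matrix.of fun _ _ => (I : ℝ)⁻¹) - W)‖) :
    ∀ k ≥ 1,
      tx (k + 1) ≤ υ * tx k + α k * β * stackNorm (g k) ∧
      tg (k + 1) ≤ υ * (tg k + γ * η * tx k + α k * γ * β * stackNorm (g k)) ∧
      th (k + 1) ≤ υ * (th k + δ * η * tx k + α k * δ * β * stackNorm (g k)) ∧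
      stackNorm (g k) ≤ G k + γ * tx k + tg k := by
  intro k hk
  have hυ' : υ = ‖toEuclideanCLM (𝕜 := ℝ) (n := Fin I) (avgMatrix I - W)‖ := hυ
  have htx' : ∀ k, tx k = stackL2 (consensusError (x k)) := fun k => by rw [htx, hbarx]; rfl
  have htg' : ∀ k, tg k = stackL2 (consensusError (g k)) := fun k => by rw [htg]; rfl
  have hth' : ∀ k, th k = stackL2 (consensusError fun i => (hmat k i).vec) := fun k => by
    rw [hth, stackFrobNorm_eq_stackL2_vec]
    exact congrArg stackL2 (vec_consensusError _)
  have hherm := isHermitian_of_tracking (fun k j => hessian_isHermitian (hC2 j) (hGf j) (hHf j)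
    (x k j)) hhinit hhrec k hk
  have hBg : stackL2 (fun i => (floorMap β (hmat k i))⁻¹ *ᵥ g k i) ≤ β * stackNorm (g k) :=
    stackL2_le_mul_of_forall hβ.le fun i => vecNorm_floorMap_inv_mulVec_le hβ (hherm i) (g k i)
  have hdx : stackL2 (x (k + 1) - x k) ≤ η * tx k + α k * (β * stackNorm (g k)) := by
    have := stackL2_descent_sub_le hW_row (x k) (fun i => (floorMap β (hmat k i))⁻¹ *ᵥ g k i) (α k)
    rw [abs_of_nonneg (hα k hk), ← hη, ← htx', ← hxrec k hk] at this
    exact this.trans (add_le_add le_rfl (mul_le_mul_of_nonneg_left hBg (hα k hk)))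
  have hGlip : ∀ i a b, vecNorm (Gf i a - Gf i b) ≤ γ * vecNorm (a - b) := fun i =>
    vecNorm_gradient_sub_le (hC2 i) (hGf i) (hHf i) hγ.le (hHbd i)
  refine ⟨?_, ?_, ?_, ?_⟩
  · have := stackL2_consensusError_descent_le hW_row hW_col (x k)
      (fun i => (floorMap β (hmat k i))⁻¹ *ᵥ g k i) (α k)
    rw [abs_of_nonneg (hα k hk), ← hυ', ← htx', ← hxrec k hk, ← htx'] at this
    linarith [mul_le_mul_of_nonneg_left hBg (hα k hk)]
  · have hΔ : stackL2 ((fun j => Gf j (x (k + 1) j)) - fun j => Gf j (x k j)) ≤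
        γ * (η * tx k + α k * (β * stackNorm (g k))) :=
      (stackL2_le_mul_of_forall hγ.le fun j => hGlip j _ _).trans
        (mul_le_mul_of_nonneg_left hdx hγ.le)
    have := stackL2_consensusError_tracking_le hW_row hW_col (g k) _ _ hΔ
    rw [← hυ', ← htg', ← hgrec k hk, ← htg'] at this
    linarith
  · have hΔ := (stackL2_vec_sub_le hδ.le hHlip (x (k + 1)) (x k)).trans
      (mul_le_mul_of_nonneg_left hdx hδ.le)
    have hvec : (fun i => (hmat (k + 1) i).vec) = fun i =>
        ∑ j, W i j • ((hmat k j).vec + (Hf j (x (k + 1) j)).vec - (Hf j (x k j)).vec) := by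
      simp only [hhrec k hk, vec_sum, vec_smul, vec_add, vec_sub]
    have := stackL2_consensusError_tracking_le hW_row hW_col (fun i => (hmat k i).vec) _ _ hΔ
    rw [← hυ', ← hth', ← hvec, ← hth'] at this
    linarith
  · have := stackL2_le_const_mean_add hγ.le hGlip (x k) (g k)
      (sum_eq_of_tracking (φ := fun k j => Gf j (x k j)) hW_col hginit hgrec k hk)
    rw [hG, hbarx, htx', htg']
    exact this

/-- one-step consensus-error bounds from the proof of Lemma 5 of the
paper, in unweighted norms. With `η = ‖I - W‖` and `υ = ‖A - W‖` (Euclidean operator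
norms), the consensus errors of the distributed Newton recursions satisfy
(i) `‖x̃_{k+1}‖ ≤ υ‖x̃_k‖ + α_kβ‖g_k‖`;
(ii) `‖g̃_{k+1}‖ ≤ υ(‖g̃_k‖ + γη‖x̃_k‖ + α_kγβ‖g_k‖)`;
(iii) `‖h̃_{k+1}‖_F ≤ υ(‖h̃_k‖_F + δη‖x̃_k‖ + α_kδβ‖g_k‖)`;
where `‖g_k‖ ≤ G_k + γ‖x̃_k‖ + ‖g̃_k‖`. -/
theorem stmt_17 {I N : ℕ}
    (f : Fin I → (Fin N → ℝ) → ℝ)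
    (Gf : Fin I → (Fin N → ℝ) → (Fin N → ℝ))
    (Hf : Fin I → (Fin N → ℝ) → Matrix (Fin N) (Fin N) ℝ)
    (hC2 : ∀ i, ContDiff ℝ 2 (f i))
    (hGf : ∀ i xv v, fderiv ℝ (f i) xv v = Gf i xv ⬝ᵥ v)
    (hHf : ∀ i xv v, fderiv ℝ (Gf i) xv v = Hf i xv *ᵥ v)
    (W : Matrix (Fin I) (Fin I) ℝ)
    (hW_nonneg : ∀ i j, 0 ≤ W i j)
    (hW_row : ∀ i, ∑ j, W i j = 1)
    (hW_col : ∀ j, ∑ i, W i j = 1)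
    (β γ δ : ℝ) (hβ : 0 < β) (hγ : 0 < γ) (hδ : 0 < δ)
    -- `‖∇²fⁱ(x)‖ ≤ γ` (operator norm bound)
    (hHbd : ∀ i xv v, vecNorm (Hf i xv *ᵥ v) ≤ γ * vecNorm v)
    -- `‖∇²fⁱ(x) - ∇²fⁱ(y)‖_F ≤ δ‖x - y‖`
    (hHlip : ∀ i xv yv,
      Real.sqrt (∑ a, ∑ b, (Hf i xv a b - Hf i yv a b) ^ 2) ≤ δ * vecNorm (xv - yv))
    (α : ℕ → ℝ) (hα : ∀ k ≥ 1, 0 ≤ α k)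
    (x g : ℕ → Fin I → (Fin N → ℝ))
    (hmat : ℕ → Fin I → Matrix (Fin N) (Fin N) ℝ)
    (hginit : g 1 = fun i => Gf i (x 1 i))
    (hhinit : hmat 1 = fun i => Hf i (x 1 i))
    (hxrec : ∀ k ≥ 1, x (k + 1) = fun i =>
      (∑ j, W i j • x k j) - α k • ((floorMap β (hmat k i))⁻¹ *ᵥ g k i))
    (hgrec : ∀ k ≥ 1, g (k + 1) = fun i =>
      ∑ j, W i j • (g k j + Gf j (x (k + 1) j) - Gf j (x k j)))
    (hhrec : ∀ k ≥ 1, hmat (k + 1) = fun i =>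
      ∑ j, W i j • (hmat k j + Hf j (x (k + 1) j) - Hf j (x k j)))
    -- derived quantities
    (barx : ℕ → Fin N → ℝ) (hbarx : ∀ k, barx k = (I : ℝ)⁻¹ • ∑ i, x k i)
    (tx tg th G : ℕ → ℝ)
    (htx : ∀ k, tx k = stackNorm (fun i => x k i - barx k))
    (htg : ∀ k, tg k = stackNorm (fun i => g k i - (I : ℝ)⁻¹ • ∑ j, g k j))
    (hth : ∀ k, th k = stackFrobNorm (fun i => hmat k i - (I : ℝ)⁻¹ • ∑ j, hmat k j))
    (hG : ∀ k, G k = stackNorm (fun _ : Fin I => (I : ℝ)⁻¹ • ∑ j, Gf j (barx k)))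
    -- operator norms `η = ‖I - W‖`, `υ = ‖A - W‖`
    (η υ : ℝ)
    (hη : η = ‖Matrix.toEuclideanCLM (𝕜 := ℝ) (n := Fin I) (1 - W)‖)
    (hυ : υ = ‖Matrix.toEuclideanCLM (𝕜 := ℝ) (n := Fin I)
      ((Matrix.of fun _ _ => (I : ℝ)⁻¹) - W)‖) :
    ∀ k ≥ 1,
      tx (k + 1) ≤ υ * tx k + α k * β * stackNorm (g k) ∧
      tg (k + 1) ≤ υ * (tg k + γ * η * tx k + α k * γ * β * stackNorm (g k)) ∧
      th (k + 1) ≤ υ * (th k + δ * η * tx k + α k * δ * β * stackNorm (g k)) ∧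
      stackNorm (g k) ≤ G k + γ * tx k + tg k :=
  stmt_17_general f Gf Hf hC2 hGf hHf W hW_row hW_col β γ δ hβ hγ hδ hHbd hHlip α hα x g hmat hginit
    hhinit hxrec hgrec hhrec barx hbarx tx tg th G htx htg hth hG η υ hη hυ
end
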